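/- arXiv:1101.0068 — 4 statements merged into one kernel-verified Lean document; each statement's English description precedes it below -/
import Mathlib

section
/- Let A be a diagonalizable complex d×d matrix A = U D U^{-1} with D diagonal and eigenvalues with strictly negative real parts. Then j(e^{As}) ≥ ϑ e^{-τ s} for all s ≥ 0, where ϑ = j(U) j(U^{-1}), τ = -min{Re(λ) : λ ∈ σ(A)}, and j(Z) = min_{||x||=1} ||Zx||. -/
open Matrix

/-- The modulus of injectivity `j(Z) = min_{‖x‖=1} ‖Z x‖` of a complex matrix. -/
noncomputable def modulusOfInjectivityC {d : ℕ} (Z : Matrix (Fin d) (Fin d) ℂ) : ℝ :=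
  sInf ((fun x : EuclideanSpace ℂ (Fin d) => ‖Matrix.toEuclideanCLM (𝕜 := ℂ) Z x‖) ''
    {x : EuclideanSpace ℂ (Fin d) | ‖x‖ = 1})

/-!
Conjugating by `U` gives `e^{sA} = U e^{sD} U⁻¹`, and `e^{sD}` is diagonal with entries
`e^{sλ}` of modulus `e^{s Re λ} ≥ e^{-τ s}`, so `j(e^{sD}) ≥ e^{-τ s}`. The modulus of
injectivity is supermultiplicative, `j(Z) j(W) ≤ j(ZW)`, which gives
`j(e^{sA}) ≥ j(U) e^{-τ s} j(U⁻¹)`.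
-/

section Conjugate

variable {ι : Type*} [Fintype ι] [DecidableEq ι]

theorem spectrum_conj_diagonal {U : Matrix ι ι ℂ} (hU : IsUnit U) (v : ι → ℂ) :
    spectrum ℂ (U * diagonal v * U⁻¹) = Set.range v := by
  obtain ⟨u, rfl⟩ := hU
  rw [← coe_units_inv, spectrum.units_conjugate, spectrum_diagonal]

theorem exp_smul_conj_diagonal {U : Matrix ι ι ℂ} (hU : IsUnit U) (v : ι → ℂ) (s : ℂ) :
    NormedSpace.exp (s • (U * diagonal v * U⁻¹)) =
      U * diagonal (fun i => Complex.exp (s * v i)) * U⁻¹ := by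
  rw [← smul_mul_assoc, ← mul_smul_comm, exp_conj _ _ hU, ← diagonal_smul, exp_diagonal]
  congr 3
  funext i
  rw [Pi.coe_exp, Pi.smul_apply, smul_eq_mul, Complex.exp_eq_exp_ℂ]

end Conjugate

section ModulusOfInjectivity

variable {d : ℕ}

theorem modulusOfInjectivityC_nonneg (Z : Matrix (Fin d) (Fin d) ℂ) :
    0 ≤ modulusOfInjectivityC Z :=
  Real.sInf_nonneg (by rintro r ⟨x, -, rfl⟩; positivity)

theorem modulusOfInjectivityC_fin_zero (Z : Matrix (Fin 0) (Fin 0) ℂ) :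
    modulusOfInjectivityC Z = 0 := by
  have hsphere : {x : EuclideanSpace ℂ (Fin 0) | ‖x‖ = 1} = ∅ := by
    ext x
    simp [Subsingleton.elim x 0]
  rw [modulusOfInjectivityC, hsphere, Set.image_empty, Real.sInf_empty]

theorem modulusOfInjectivityC_mul_norm_le (Z : Matrix (Fin d) (Fin d) ℂ)
    (x : EuclideanSpace ℂ (Fin d)) :
    modulusOfInjectivityC Z * ‖x‖ ≤ ‖toEuclideanCLM (𝕜 := ℂ) Z x‖ := by
  rcases eq_or_ne x 0 with rfl | hx
  · simp
  have hx' : 0 < ‖x‖ := norm_pos_iff.mpr hx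
  have hunit : ‖(‖x‖⁻¹ : ℂ) • x‖ = 1 := by
    rw [norm_smul, norm_inv, Complex.norm_real, norm_norm, inv_mul_cancel₀ hx'.ne']
  have hbdd : BddBelow ((fun y : EuclideanSpace ℂ (Fin d) => ‖toEuclideanCLM (𝕜 := ℂ) Z y‖) ''
      {y | ‖y‖ = 1}) :=
    ⟨0, by rintro r ⟨y, -, rfl⟩; positivity⟩
  have hle : modulusOfInjectivityC Z ≤ ‖toEuclideanCLM (𝕜 := ℂ) Z ((‖x‖⁻¹ : ℂ) • x)‖ :=
    csInf_le hbdd ⟨_, hunit, rfl⟩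
  rw [map_smul, norm_smul, norm_inv, Complex.norm_real, norm_norm] at hle
  rwa [← le_div_iff₀ hx', div_eq_inv_mul]

theorem le_modulusOfInjectivityC_of_mul_norm_le (hd : 0 < d) {Z : Matrix (Fin d) (Fin d) ℂ}
    {c : ℝ} (h : ∀ x, c * ‖x‖ ≤ ‖toEuclideanCLM (𝕜 := ℂ) Z x‖) :
    c ≤ modulusOfInjectivityC Z := by
  have hunit : ‖EuclideanSpace.single (⟨0, hd⟩ : Fin d) (1 : ℂ)‖ = 1 := by simp
  refine le_csInf ⟨_, ⟨_, hunit, rfl⟩⟩ ?_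
  rintro r ⟨x, hx, rfl⟩
  simpa [Set.mem_ofPred_eq.mp hx] using h x

theorem mul_le_modulusOfInjectivityC_mul (Z W : Matrix (Fin d) (Fin d) ℂ) :
    modulusOfInjectivityC Z * modulusOfInjectivityC W ≤ modulusOfInjectivityC (Z * W) := by
  rcases Nat.eq_zero_or_pos d with rfl | hd
  · simp [modulusOfInjectivityC_fin_zero]
  refine le_modulusOfInjectivityC_of_mul_norm_le hd fun x => ?_
  calc modulusOfInjectivityC Z * modulusOfInjectivityC W * ‖x‖
      ≤ modulusOfInjectivityC Z * ‖toEuclideanCLM (𝕜 := ℂ) W x‖ := by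
        rw [mul_assoc]
        exact mul_le_mul_of_nonneg_left (modulusOfInjectivityC_mul_norm_le W x)
          (modulusOfInjectivityC_nonneg Z)
    _ ≤ ‖toEuclideanCLM (𝕜 := ℂ) Z (toEuclideanCLM (𝕜 := ℂ) W x)‖ :=
        modulusOfInjectivityC_mul_norm_le Z _
    _ = ‖toEuclideanCLM (𝕜 := ℂ) (Z * W) x‖ := by rw [map_mul]; rfl

theorem mul_norm_le_norm_toEuclideanCLM_diagonal {v : Fin d → ℂ} {c : ℝ} (hc : 0 ≤ c)
    (hv : ∀ i, c ≤ ‖v i‖) (x : EuclideanSpace ℂ (Fin d)) :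
    c * ‖x‖ ≤ ‖toEuclideanCLM (𝕜 := ℂ) (diagonal v) x‖ := by
  have happly : ∀ i, toEuclideanCLM (𝕜 := ℂ) (diagonal v) x i = v i * x i := fun i => by
    simp [mulVec_diagonal]
  refine le_of_pow_le_pow_left₀ two_ne_zero (norm_nonneg _) ?_
  rw [mul_pow, EuclideanSpace.norm_sq_eq, EuclideanSpace.norm_sq_eq, Finset.mul_sum]
  refine Finset.sum_le_sum fun i _ => ?_
  rw [happly, norm_mul, mul_pow]
  gcongr
  exact hv i

theorem le_modulusOfInjectivityC_diagonal (hd : 0 < d) {v : Fin d → ℂ} {c : ℝ} (hc : 0 ≤ c)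
    (hv : ∀ i, c ≤ ‖v i‖) : c ≤ modulusOfInjectivityC (diagonal v) :=
  le_modulusOfInjectivityC_of_mul_norm_le hd (mul_norm_le_norm_toEuclideanCLM_diagonal hc hv)

end ModulusOfInjectivity

theorem modulusOfInjectivity_exp_ge_of_diagonalizable_general {d : ℕ}
    (A U D : Matrix (Fin d) (Fin d) ℂ) (hU : IsUnit U) (hD : D.IsDiag)
    (hA : A = U * D * U⁻¹)
    (ϑ τ : ℝ) (hϑ : ϑ = modulusOfInjectivityC U * modulusOfInjectivityC U⁻¹)
    (hτ : τ = -sInf (Complex.re '' spectrum ℂ A)) :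
    ∀ s : ℝ, 0 ≤ s →
      modulusOfInjectivityC (NormedSpace.exp ((s : ℂ) • A)) ≥ ϑ * Real.exp (-τ * s) := by
  intro s hs
  rcases Nat.eq_zero_or_pos d with rfl | hd
  · simp [hϑ, modulusOfInjectivityC_fin_zero]
  rw [← (isDiag_iff_diagonal_diag D).mp hD] at hA
  subst hA hϑ
  have hre : ∀ i, -τ ≤ (D.diag i).re := fun i => by
    rw [hτ, neg_neg, spectrum_conj_diagonal hU]
    exact csInf_le ((Set.finite_range _).image _).bddBelow ⟨_, ⟨i, rfl⟩, rfl⟩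
  have hentry : ∀ i, Real.exp (-τ * s) ≤ ‖Complex.exp (s * D.diag i)‖ := fun i => by
    rw [Complex.norm_exp, Complex.re_ofReal_mul, mul_comm]
    gcongr
    exact hre i
  have hdiag := le_modulusOfInjectivityC_diagonal hd (Real.exp_nonneg _) hentry
  rw [exp_smul_conj_diagonal hU]
  generalize diagonal (fun i => Complex.exp (s * D.diag i)) = E at hdiag ⊢
  have hU₀ := modulusOfInjectivityC_nonneg U
  have hU₁ := modulusOfInjectivityC_nonneg U⁻¹
  calc modulusOfInjectivityC U * modulusOfInjectivityC U⁻¹ * Real.exp (-τ * s)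
      = modulusOfInjectivityC U * Real.exp (-τ * s) * modulusOfInjectivityC U⁻¹ := by ring
    _ ≤ modulusOfInjectivityC U * modulusOfInjectivityC E * modulusOfInjectivityC U⁻¹ := by
        gcongr
    _ ≤ modulusOfInjectivityC (U * E) * modulusOfInjectivityC U⁻¹ :=
        mul_le_mul_of_nonneg_right (mul_le_modulusOfInjectivityC_mul U E) hU₁
    _ ≤ modulusOfInjectivityC (U * E * U⁻¹) := mul_le_modulusOfInjectivityC_mul _ _

theorem modulusOfInjectivity_exp_ge_of_diagonalizable {d : ℕ}
    (A U D : Matrix (Fin d) (Fin d) ℂ) (hU : IsUnit U) (hD : D.IsDiag)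
    (hA : A = U * D * U⁻¹)
    (hneg : ∀ μ ∈ spectrum ℂ A, μ.re < 0)
    (ϑ τ : ℝ) (hϑ : ϑ = modulusOfInjectivityC U * modulusOfInjectivityC U⁻¹)
    (hτ : τ = -sInf (Complex.re '' spectrum ℂ A)) :
    ∀ s : ℝ, 0 ≤ s →
      modulusOfInjectivityC (NormedSpace.exp ((s : ℂ) • A)) ≥ ϑ * Real.exp (-τ * s) :=
  modulusOfInjectivity_exp_ge_of_diagonalizable_general A U D hU hD hA ϑ τ hϑ hτ
end

section
/- Let B ∈ M_d(C) be diagonalizable with all eigenvalues having strictly negative real part, let α > 1, β > 0 and h ≥ 0. Then ∫_0^∞ e^{(Bh − βI_d) r} r^{α−2} dr = Γ(α−1) (βI_d − Bh)^{1−α}, where the matrix power is defined by spectral calculus via the principal branch of the logarithm. -/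
/-!
Conjugating by `U`, the integrand becomes `U * diagonal (r ^ (α - 2) * exp (-c_k r)) * U⁻¹` with
`c_k = β - D k k * h`, and `Re c_k > 0` because the `D k k` are the eigenvalues of `B`. Entrywise
the integral then reduces to the scalar Gamma integral `∫₀^∞ t^(a-1) e^(-c t) dt = Γ(a) c^(-a)`
for `Re c > 0`. For real `c` this is a substitution; both sides are holomorphic in `c` on the
right half-plane (the left one by differentiation under the integral sign), so the identity
theorem extends it from the positive reals.
-/

open Matrix MeasureTheory

/-- The matrix power `(β I_d - B h)^{1-α}` defined by spectral calculus via the principal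
branch of the complex logarithm, for `B = U D U⁻¹` diagonalizable. -/
noncomputable def spectralPower {d : ℕ} (U D : Matrix (Fin d) (Fin d) ℂ)
    (β h : ℝ) (α : ℝ) : Matrix (Fin d) (Fin d) ℂ :=
  U * Matrix.diagonal (fun i => ((β : ℂ) - D i i * (h : ℂ)) ^ ((1 : ℂ) - (α : ℂ))) * U⁻¹

namespace Matrix

variable {ι R : Type*} [Fintype ι] [DecidableEq ι]

lemma mul_diagonal_mul_apply [NonUnitalNonAssocSemiring R] (U V : Matrix ι ι R) (f : ι → R)
    (i j : ι) : (U * diagonal f * V) i j = ∑ k, U i k * f k * V k j := by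
  rw [mul_apply]
  simp_rw [mul_diagonal]

lemma smul_mul_diagonal_mul [CommSemiring R] (c : R) (U V : Matrix ι ι R) (f : ι → R) :
    c • (U * diagonal f * V) = U * diagonal (c • f) * V := by
  rw [diagonal_smul, Matrix.mul_smul, Matrix.smul_mul]

lemma spectrum_mul_diagonal_mul_inv [Field R] {U : Matrix ι ι R} (hU : IsUnit U) (f : ι → R) :
    spectrum R (U * diagonal f * U⁻¹) = Set.range f := by
  obtain ⟨u, rfl⟩ := hU
  rw [← coe_units_inv, spectrum.units_conjugate, spectrum_diagonal]

lemma smul_sub_smul_one_mul_diagonal_mul_inv [CommRing R] {U : Matrix ι ι R} (hU : IsUnit U)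
    (f : ι → R) (r s b : R) :
    r • (s • (U * diagonal f * U⁻¹) - b • 1) = U * diagonal (fun k => r * (s * f k - b)) * U⁻¹ := by
  have : diagonal (fun k => r * (s * f k - b)) = r • (s • diagonal f - b • 1) := by
    ext k l
    by_cases hkl : k = l <;> simp [hkl]
  rw [this]
  simp only [Matrix.mul_smul, Matrix.smul_mul, Matrix.mul_sub, Matrix.sub_mul, Matrix.mul_one,
    mul_nonsing_inv _ ((isUnit_iff_isUnit_det U).mp hU)]

lemma exp_mul_diagonal_mul_inv {U : Matrix ι ι ℂ} (hU : IsUnit U) (f : ι → ℂ) :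
    NormedSpace.exp (U * diagonal f * U⁻¹) = U * diagonal (fun k => Complex.exp (f k)) * U⁻¹ := by
  rw [exp_conj _ _ hU, exp_diagonal]
  congr
  funext k
  rw [Pi.coe_exp, Complex.exp_eq_exp_ℂ]

lemma integral_mul_diagonal_mul_apply {X : Type*} [MeasurableSpace X] {μ : Measure X}
    (U V : Matrix ι ι ℂ) (f : X → ι → ℂ) (hf : ∀ k, Integrable (fun x => f x k) μ) (i j : ι) :
    ∫ x, (U * diagonal (f x) * V) i j ∂μ = (U * diagonal (fun k => ∫ x, f x k ∂μ) * V) i j := by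
  simp_rw [mul_diagonal_mul_apply]
  rw [integral_finsetSum _ fun k _ => ((hf k).const_mul _).mul_const _]
  simp_rw [integral_mul_const, integral_const_mul]

end Matrix

lemma integrableOn_rpow_mul_exp_neg_mul {s b : ℝ} (hs : 0 < s) (hb : 0 < b) :
    IntegrableOn (fun t : ℝ => t ^ (s - 1) * Real.exp (-(b * t))) (Set.Ioi 0) := by
  simpa using integrableOn_rpow_mul_exp_neg_mul_rpow (p := 1) (by linarith) one_pos hb

namespace Complex

open Set Filter Metric Topology

lemma norm_ofReal_cpow_mul_exp_neg_mul (a c : ℂ) {t : ℝ} (ht : 0 < t) :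
    ‖(t : ℂ) ^ (a - 1) * exp (-(c * t))‖ = t ^ (a.re - 1) * Real.exp (-(c.re * t)) := by
  simp [norm_cpow_eq_rpow_re_of_pos ht, norm_exp]

lemma continuousOn_ofReal_cpow_mul_exp_neg_mul (a c : ℂ) :
    ContinuousOn (fun t : ℝ => (t : ℂ) ^ (a - 1) * exp (-(c * t))) (Ioi 0) := by
  refine ContinuousOn.mul (fun t ht => ?_) (by fun_prop)
  exact (continuousAt_ofReal_cpow_const t _ (Or.inr (ne_of_gt ht))).continuousWithinAt

lemma integrableOn_ofReal_cpow_mul_exp_neg_mul {a c : ℂ} (ha : 0 < a.re) (hc : 0 < c.re) :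
    IntegrableOn (fun t : ℝ => (t : ℂ) ^ (a - 1) * exp (-(c * t))) (Ioi 0) := by
  refine (integrableOn_rpow_mul_exp_neg_mul ha hc).mono'
    ((continuousOn_ofReal_cpow_mul_exp_neg_mul a c).aestronglyMeasurable measurableSet_Ioi) ?_
  filter_upwards [ae_restrict_mem measurableSet_Ioi] with t ht
  exact (norm_ofReal_cpow_mul_exp_neg_mul a c ht).le

lemma differentiableAt_integral_ofReal_cpow_mul_exp_neg_mul {a c₀ : ℂ} (ha : 0 < a.re)
    (hc₀ : 0 < c₀.re) :
    DifferentiableAt ℂ (fun c : ℂ => ∫ t : ℝ in Ioi 0, (t : ℂ) ^ (a - 1) * exp (-(c * t))) c₀ := by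
  have hre : ∀ c ∈ ball c₀ (c₀.re / 2), c₀.re / 2 ≤ c.re := fun c hc => by
    have := (abs_re_le_norm (c - c₀)).trans (mem_ball_iff_norm.mp hc).le
    rw [sub_re, abs_le] at this
    linarith
  refine (hasDerivAt_integral_of_dominated_loc_of_deriv_le
    (F' := fun c t => -(t * ((t : ℂ) ^ (a - 1) * exp (-(c * t)))))
    (bound := fun t => t ^ (a.re + 1 - 1) * Real.exp (-(c₀.re / 2 * t)))
    (ball_mem_nhds c₀ (half_pos hc₀))
    (Eventually.of_forall fun c =>
      (continuousOn_ofReal_cpow_mul_exp_neg_mul a c).aestronglyMeasurable measurableSet_Ioi)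
    (integrableOn_ofReal_cpow_mul_exp_neg_mul ha hc₀)
    ((continuous_ofReal.continuousOn.mul (continuousOn_ofReal_cpow_mul_exp_neg_mul a c₀)).neg
      |>.aestronglyMeasurable measurableSet_Ioi)
    ?_ (integrableOn_rpow_mul_exp_neg_mul (by linarith) (half_pos hc₀)) ?_).2.differentiableAt
  · filter_upwards [ae_restrict_mem measurableSet_Ioi] with t (ht : 0 < t) c hc
    rw [norm_neg, norm_mul, norm_ofReal_cpow_mul_exp_neg_mul a c ht, norm_real,
      Real.norm_of_nonneg ht.le, add_sub_cancel_right, ← mul_assoc,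
      ← Real.rpow_one_add' ht.le (by linarith), add_sub_cancel]
    gcongr
    nlinarith [hre c hc]
  · filter_upwards with t c _
    have hd : HasDerivAt (fun c : ℂ => -(c * t)) (-t) c := (hasDerivAt_mul_const _).neg
    exact (hd.cexp.const_mul ((t : ℂ) ^ (a - 1))).congr_deriv (by ring)

lemma integral_ofReal_cpow_mul_exp_neg_mul {a c : ℂ} (ha : 0 < a.re) (hc : 0 < c.re) :
    ∫ t : ℝ in Ioi 0, (t : ℂ) ^ (a - 1) * exp (-(c * t)) = Gamma a * c ^ (-a) := by
  have hopen : IsOpen {z : ℂ | 0 < z.re} := isOpen_lt continuous_const continuous_re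
  have hf : AnalyticOnNhd ℂ (fun c : ℂ => ∫ t : ℝ in Ioi 0, (t : ℂ) ^ (a - 1) * exp (-(c * t)))
      {z | 0 < z.re} := DifferentiableOn.analyticOnNhd (fun c hc =>
    (differentiableAt_integral_ofReal_cpow_mul_exp_neg_mul ha hc).differentiableWithinAt) hopen
  have hg : AnalyticOnNhd ℂ (fun c : ℂ => Gamma a * c ^ (-a)) {z | 0 < z.re} :=
    DifferentiableOn.analyticOnNhd (fun c hc =>
      ((differentiableAt_id.cpow_const (Or.inl hc)).const_mul _).differentiableWithinAt) hopen
  have hreal : ∀ r : ℝ, 0 < r →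
      ∫ t : ℝ in Ioi 0, (t : ℂ) ^ (a - 1) * exp (-(r * t)) = Gamma a * (r : ℂ) ^ (-a) := by
    intro r hr
    rw [integral_cpow_mul_exp_neg_mul_Ioi ha hr, mul_comm, one_div,
      inv_cpow _ _ (by simp [arg_ofReal_of_nonneg hr.le, Real.pi_ne_zero.symm]), cpow_neg]
  have hofReal : Tendsto ((↑) : ℝ → ℂ) (𝓝[≠] 1) (𝓝[≠] 1) :=
    (continuous_ofReal.tendsto' 1 1 ofReal_one).inf
      (tendsto_principal_principal.2 fun x hx => by simpa using hx)
  refine hf.eqOn_of_preconnected_of_frequently_eq hg (convex_halfSpace_re_gt 0).isPreconnected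
    (by simp : (1 : ℂ) ∈ {z : ℂ | 0 < z.re}) ?_ hc
  exact hofReal.frequently
    ((eventually_nhdsWithin_of_eventually_nhds (eventually_gt_nhds one_pos)).frequently.mono hreal)

end Complex

theorem integral_matrix_exp_rpow {d : ℕ} (B U D : Matrix (Fin d) (Fin d) ℂ)
    (hU : IsUnit U) (hD : D.IsDiag) (hB : B = U * D * U⁻¹)
    (hneg : ∀ μ ∈ spectrum ℂ B, μ.re < 0)
    (α β h : ℝ) (hα : 1 < α) (hβ : 0 < β) (hh : 0 ≤ h) :
    ∀ i j : Fin d,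
      ∫ r in Set.Ioi (0 : ℝ),
          (NormedSpace.exp ((r : ℂ) • ((h : ℂ) • B - (β : ℂ) • (1 : Matrix (Fin d) (Fin d) ℂ)))) i j
            * (r : ℂ) ^ ((α : ℂ) - 2) =
        (Complex.Gamma ((α : ℂ) - 1) • spectralPower U D β h α) i j := by
  intro i j
  rw [← hD.diagonal_diag] at hB
  have hc : ∀ k, 0 < ((β : ℂ) - D k k * h).re := fun k => by
    have := hneg (D k k) (by rw [hB, spectrum_mul_diagonal_mul_inv hU]; exact ⟨k, rfl⟩)
    simp only [Complex.sub_re, Complex.ofReal_re, Complex.mul_re, Complex.ofReal_im, mul_zero,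
      sub_zero]
    nlinarith
  have ha : 0 < ((α : ℂ) - 1).re := by simpa using hα
  calc _ = ∫ r in Set.Ioi (0 : ℝ), (U * diagonal (fun k => (r : ℂ) ^ ((α : ℂ) - 1 - 1) *
          Complex.exp (-(((β : ℂ) - D k k * h) * r))) * U⁻¹) i j := by
        refine setIntegral_congr_fun measurableSet_Ioi fun r _ => ?_
        rw [hB, smul_sub_smul_one_mul_diagonal_mul_inv hU, exp_mul_diagonal_mul_inv hU]
        simp only [mul_diagonal_mul_apply, Finset.sum_mul, diag_apply]
        refine Finset.sum_congr rfl fun k _ => ?_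
        ring_nf
    _ = _ := by
      rw [integral_mul_diagonal_mul_apply _ _ _
        fun k => Complex.integrableOn_ofReal_cpow_mul_exp_neg_mul ha (hc k)]
      simp_rw [Complex.integral_ofReal_cpow_mul_exp_neg_mul ha (hc _), spectralPower,
        smul_mul_diagonal_mul]
      simp only [mul_diagonal_mul_apply, Pi.smul_apply, smul_eq_mul, neg_sub]
end

section
/- For all z, k ∈ C with Re(z) > 0 and Re(k) > 0, ∫_0^∞ t^{z−1} e^{−kt} dt = Γ(z) k^{−z}, where k^{−z} is defined via the principal branch of the complex logarithm. -/
/-!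
For real `k = r > 0` the substitution `u = r t` reduces the integral to `Γ(z)`
(`Complex.integral_cpow_mul_exp_neg_mul_Ioi`). Both sides are holomorphic in `k` on the right
half-plane — the left side by differentiation under the integral sign, dominated by
`t ^ Re z * exp (-(Re k / 2) t)` near `k` — and they agree on the positive reals, so they agree
everywhere by the identity theorem.
-/

open MeasureTheory Set Filter Metric Topology Complex

lemma norm_cpow_mul_cexp_neg_mul {t : ℝ} (ht : 0 < t) (z k : ℂ) :
    ‖(t : ℂ) ^ (z - 1) * cexp (-k * t)‖ = t ^ (z.re - 1) * Real.exp (-k.re * t) := by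
  rw [norm_mul, norm_cpow_eq_rpow_re_of_pos ht, norm_exp]
  simp

lemma continuousOn_cpow_mul_cexp_neg_mul (z k : ℂ) :
    ContinuousOn (fun t : ℝ => (t : ℂ) ^ (z - 1) * cexp (-k * t)) (Ioi 0) := by
  refine ContinuousOn.mul (fun t ht => ?_) (by fun_prop)
  exact ((continuousAt_cpow_const (ofReal_mem_slitPlane.mpr ht)).comp
    continuous_ofReal.continuousAt).continuousWithinAt

lemma integrableOn_cpow_mul_cexp_neg_mul_Ioi {z k : ℂ} (hz : 0 < z.re) (hk : 0 < k.re) :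
    IntegrableOn (fun t : ℝ => (t : ℂ) ^ (z - 1) * cexp (-k * t)) (Ioi 0) := by
  have hbound : IntegrableOn (fun t : ℝ => t ^ (z.re - 1) * Real.exp (-k.re * t)) (Ioi 0) := by
    simpa using integrableOn_rpow_mul_exp_neg_mul_rpow (p := 1) (by linarith) one_pos hk
  refine hbound.mono' ((continuousOn_cpow_mul_cexp_neg_mul z k).aestronglyMeasurable
    measurableSet_Ioi) ?_
  filter_upwards [ae_restrict_mem measurableSet_Ioi] with t ht
  exact (norm_cpow_mul_cexp_neg_mul ht z k).le

lemma norm_neg_mul_cpow_mul_cexp_neg_mul_le {t ε : ℝ} (ht : 0 < t) (z : ℂ) {k : ℂ}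
    (hε : ε ≤ k.re) :
    ‖-(t : ℂ) * ((t : ℂ) ^ (z - 1) * cexp (-k * t))‖ ≤ t ^ z.re * Real.exp (-ε * t) := by
  rw [norm_mul, norm_cpow_mul_cexp_neg_mul ht, norm_neg, norm_real, Real.norm_of_nonneg ht.le]
  calc t * (t ^ (z.re - 1) * Real.exp (-k.re * t))
      ≤ t * (t ^ (z.re - 1) * Real.exp (-ε * t)) := by gcongr
    _ = t ^ z.re * Real.exp (-ε * t) := by
      rw [Real.rpow_sub_one ht.ne']
      field_simp

lemma hasDerivAt_integral_cpow_mul_cexp_neg_mul {z k : ℂ} (hz : 0 < z.re) (hk : 0 < k.re) :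
    HasDerivAt (fun k : ℂ => ∫ t in Ioi (0 : ℝ), (t : ℂ) ^ (z - 1) * cexp (-k * t))
      (∫ t in Ioi (0 : ℝ), -(t : ℂ) * ((t : ℂ) ^ (z - 1) * cexp (-k * t))) k := by
  have hε : 0 < k.re / 2 := by positivity
  have re_lt_of_mem_ball : ∀ x ∈ ball k (k.re / 2), k.re / 2 < x.re := fun x hx => by
    have := (abs_re_le_norm (x - k)).trans_lt (mem_ball_iff_norm.mp hx)
    rw [sub_re, abs_lt] at this
    linarith
  have hderiv_meas : AEStronglyMeasurable
      (fun t : ℝ => -(t : ℂ) * ((t : ℂ) ^ (z - 1) * cexp (-k * t))) (volume.restrict (Ioi 0)) :=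
    (continuous_ofReal.continuousOn.neg.mul (continuousOn_cpow_mul_cexp_neg_mul z k))
      |>.aestronglyMeasurable measurableSet_Ioi
  refine (hasDerivAt_integral_of_dominated_loc_of_deriv_le
    (F' := fun x t => -(t : ℂ) * ((t : ℂ) ^ (z - 1) * cexp (-x * t))) (ball_mem_nhds k hε)
    (Eventually.of_forall fun x => (continuousOn_cpow_mul_cexp_neg_mul z x).aestronglyMeasurable
      measurableSet_Ioi)
    (integrableOn_cpow_mul_cexp_neg_mul_Ioi hz hk) hderiv_meas ?_
    (integrableOn_rpow_mul_exp_neg_mul_rpow (s := z.re) (p := 1) (by linarith) one_pos hε) ?_).2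
  · filter_upwards [ae_restrict_mem measurableSet_Ioi] with t ht x hx
    simpa only [Real.rpow_one] using
      norm_neg_mul_cpow_mul_cexp_neg_mul_le ht z (re_lt_of_mem_ball x hx).le
  · filter_upwards with t x _
    have h : HasDerivAt (fun y : ℂ => (t : ℂ) ^ (z - 1) * cexp (-y * t)) _ x :=
      ((hasDerivAt_neg x).mul_const (t : ℂ)).cexp.const_mul _
    exact h.congr_deriv (by ring)

lemma differentiableOn_integral_cpow_mul_cexp_neg_mul {z : ℂ} (hz : 0 < z.re) :
    DifferentiableOn ℂ (fun k : ℂ => ∫ t in Ioi (0 : ℝ), (t : ℂ) ^ (z - 1) * cexp (-k * t))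
      {k | 0 < k.re} := fun _ hk =>
  (hasDerivAt_integral_cpow_mul_cexp_neg_mul hz hk).differentiableAt.differentiableWithinAt

lemma integral_cpow_mul_cexp_neg_ofReal_mul {z : ℂ} (hz : 0 < z.re) {r : ℝ} (hr : 0 < r) :
    ∫ t in Ioi (0 : ℝ), (t : ℂ) ^ (z - 1) * cexp (-r * t) = Gamma z * (r : ℂ) ^ (-z) := by
  have harg : arg (r : ℂ) ≠ Real.pi := by
    rw [arg_ofReal_of_nonneg hr.le]
    exact Real.pi_ne_zero.symm
  simp_rw [neg_mul]
  rw [integral_cpow_mul_exp_neg_mul_Ioi hz hr, one_div, inv_cpow _ _ harg, cpow_neg, mul_comm]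

lemma eqOn_re_pos_of_forall_ofReal_eq {E : Type*} [NormedAddCommGroup E] [NormedSpace ℂ E]
    [CompleteSpace E] {f g : ℂ → E} (hf : DifferentiableOn ℂ f {k | 0 < k.re})
    (hg : DifferentiableOn ℂ g {k | 0 < k.re}) (hfg : ∀ r : ℝ, 0 < r → f r = g r) :
    EqOn f g {k | 0 < k.re} := by
  have hopen : IsOpen {k : ℂ | 0 < k.re} := isOpen_lt continuous_const continuous_re
  have hreal : Tendsto ((↑) : ℝ → ℂ) (𝓝[>] 1) (𝓝[≠] 1) :=
    continuous_ofReal.continuousWithinAt.tendsto_nhdsWithin fun r hr =>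
      ofReal_ne_one.mpr (ne_of_gt hr)
  refine (hf.analyticOnNhd hopen).eqOn_of_preconnected_of_frequently_eq (hg.analyticOnNhd hopen)
    (convex_halfSpace_re_gt 0).isPreconnected (by simp)
    (hreal.frequently (Eventually.frequently ?_))
  filter_upwards [self_mem_nhdsWithin] with r hr
  exact hfg r (zero_lt_one.trans hr)

theorem integral_cpow_exp_eq_Gamma_mul_cpow (z k : ℂ) (hz : 0 < z.re) (hk : 0 < k.re) :
    ∫ t in Set.Ioi (0 : ℝ), (t : ℂ) ^ (z - 1) * Complex.exp (-k * t) =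
      Complex.Gamma z * k ^ (-z) := by
  have hGamma : DifferentiableOn ℂ (fun k : ℂ => Gamma z * k ^ (-z)) {k | 0 < k.re} :=
    fun k hk => ((differentiableAt_id.cpow (differentiableAt_const _)
      (Or.inl hk)).const_mul _).differentiableWithinAt
  exact eqOn_re_pos_of_forall_ofReal_eq (differentiableOn_integral_cpow_mul_cexp_neg_mul hz)
    hGamma (fun r hr => integral_cpow_mul_cexp_neg_ofReal_mul hz hr) hk
end

section
/- Let a ∈ R^d, κ ≥ 1 and ρ > 0 with ||e^{As}|| ≤ κ e^{-ρs} for all s ≥ 0 for a fixed A ∈ M_d(R), and let ν be a Lévy measure on R^d (i.e. ν({0})=0 and ∫ (1 ∧ ||x||²) ν(dx) < ∞) with ∫_{||x||>1} ln(||x||) ν(dx) < ∞. Then ∫_0^∞ ∫_{R^d} (1 ∧ ||e^{As}x||²) ν(dx) ds ≤ ∫_{||x||>1/κ} (ln(κ||x||)+1/2)/ρ ν(dx) + ∫_{||x||≤1/κ} κ²||x||²/(2ρ) ν(dx) < ∞. -/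
/-! Since `‖e^{sA} x‖ ≤ c e^{-ρs}` with `c = κ‖x‖`, after swapping the integrals (a Lévy measure is
σ-finite) the time integral of `min 1 (c² e^{-2ρs})` is at most `c² / (2ρ)`, and for `c ≥ 1`,
cutting at `s₀ = log c / ρ`, where `c e^{-ρ s₀} = 1`, it is at most `s₀ + 1 / (2ρ)`. The small jumps
are then controlled by `∫ min 1 ‖x‖² dν`, the large ones by the finite mass of `{‖x‖ > 1/κ}` and
the log-moment. -/

open Matrix MeasureTheory

/-- The Euclidean operator norm of a real matrix. -/
noncomputable def euclideanOpNorm {d : ℕ} (Z : Matrix (Fin d) (Fin d) ℝ) : ℝ :=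
  ‖Matrix.toEuclideanCLM (𝕜 := ℝ) Z‖

open Real Set ENNReal

lemma lintegral_Ioi_min_one_mul_exp_le {b c : ℝ} (hb : 0 < b) (hc : 0 ≤ c) {s₀ : ℝ}
    (hs₀ : 0 ≤ s₀) :
    ∫⁻ s in Ioi 0, ENNReal.ofReal (min 1 (c * exp (-b * s))) ≤
      ENNReal.ofReal s₀ + ENNReal.ofReal (c * exp (-b * s₀) / b) := by
  rw [← Ioc_union_Ioi_eq_Ioi hs₀]
  refine (lintegral_union_le _ _ _).trans (add_le_add ?_ ?_)
  · calc ∫⁻ s in Ioc 0 s₀, ENNReal.ofReal (min 1 (c * exp (-b * s)))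
        ≤ ∫⁻ _ in Ioc 0 s₀, 1 := lintegral_mono fun s => ofReal_le_one.2 (min_le_left _ _)
      _ = ENNReal.ofReal s₀ := by simp [Real.volume_Ioc]
  · have hint : IntegrableOn (fun s => c * exp (-b * s)) (Ioi s₀) :=
      (exp_neg_integrableOn_Ioi s₀ hb).const_mul c
    calc _ ≤ ∫⁻ s in Ioi s₀, ENNReal.ofReal (c * exp (-b * s)) :=
          lintegral_mono fun s => ofReal_le_ofReal (min_le_right _ _)
      _ = ENNReal.ofReal (c * exp (-b * s₀) / b) := by
          rw [← ofReal_integral_eq_lintegral_ofReal hint (ae_of_all _ fun s => by positivity),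
            integral_const_mul, integral_exp_mul_Ioi (neg_lt_zero.2 hb), neg_div_neg_eq,
            mul_div_assoc]

lemma sq_mul_exp_neg_mul (c ρ s : ℝ) :
    (c * exp (-ρ * s)) ^ 2 = c ^ 2 * exp (-(2 * ρ) * s) := by
  rw [mul_pow, ← exp_nat_mul]; ring_nf

lemma lintegral_Ioi_min_one_sq_mul_exp_le_sq {ρ : ℝ} (hρ : 0 < ρ) (c : ℝ) :
    ∫⁻ s in Ioi 0, ENNReal.ofReal (min 1 ((c * exp (-ρ * s)) ^ 2)) ≤
      ENNReal.ofReal (c ^ 2 / (2 * ρ)) := by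
  simp_rw [sq_mul_exp_neg_mul]
  simpa using lintegral_Ioi_min_one_mul_exp_le (by positivity : 0 < 2 * ρ) (sq_nonneg c) le_rfl

lemma lintegral_Ioi_min_one_sq_mul_exp_le_log {ρ c : ℝ} (hρ : 0 < ρ) (hc : 1 ≤ c) :
    ∫⁻ s in Ioi 0, ENNReal.ofReal (min 1 ((c * exp (-ρ * s)) ^ 2)) ≤
      ENNReal.ofReal ((log c + 1 / 2) / ρ) := by
  have hs₀ : 0 ≤ log c / ρ := div_nonneg (log_nonneg hc) hρ.le
  have hcut : c ^ 2 * exp (-(2 * ρ) * (log c / ρ)) / (2 * ρ) = 1 / (2 * ρ) := by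
    rw [show -(2 * ρ) * (log c / ρ) = -((2 : ℕ) * log c) by field_simp; push_cast; ring,
      exp_neg, exp_nat_mul, exp_log (by positivity)]
    field_simp
  simp_rw [sq_mul_exp_neg_mul]
  refine (lintegral_Ioi_min_one_mul_exp_le (by positivity) (sq_nonneg c) hs₀).trans_eq ?_
  rw [hcut, ← ofReal_add hs₀ (by positivity)]
  congr 1
  field_simp

section LevyMeasure

variable {E : Type*} [NormedAddCommGroup E]

lemma lintegral_Ioi_min_one_sq_mul_exp_le_indicator {κ ρ : ℝ} (hκ : 0 < κ) (hρ : 0 < ρ) (x : E) :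
    ∫⁻ s in Ioi 0, ENNReal.ofReal (min 1 ((κ * ‖x‖ * exp (-ρ * s)) ^ 2)) ≤
      {x | 1 / κ < ‖x‖}.indicator (fun x => ENNReal.ofReal ((log (κ * ‖x‖) + 1 / 2) / ρ)) x +
        {x | ‖x‖ ≤ 1 / κ}.indicator (fun x => ENNReal.ofReal (κ ^ 2 * ‖x‖ ^ 2 / (2 * ρ))) x := by
  by_cases hx : 1 / κ < ‖x‖
  · rw [indicator_of_mem (show x ∈ {x | 1 / κ < ‖x‖} from hx),
      indicator_of_notMem (show x ∉ {x | ‖x‖ ≤ 1 / κ} from not_le.2 hx), add_zero]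
    exact lintegral_Ioi_min_one_sq_mul_exp_le_log hρ ((div_lt_iff₀' hκ).1 hx).le
  · rw [indicator_of_notMem (show x ∉ {x | 1 / κ < ‖x‖} from hx),
      indicator_of_mem (show x ∈ {x | ‖x‖ ≤ 1 / κ} from not_lt.1 hx), zero_add, ← mul_pow]
    exact lintegral_Ioi_min_one_sq_mul_exp_le_sq hρ (κ * ‖x‖)

variable [MeasurableSpace E] [OpensMeasurableSpace E] {ν : Measure E}

lemma measure_lt_norm_lt_top (hν2 : ∫⁻ x, ENNReal.ofReal (min 1 (‖x‖ ^ 2)) ∂ν < ⊤) {r : ℝ}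
    (hr : 0 < r) : ν {x | r < ‖x‖} < ⊤ := by
  have hε : ENNReal.ofReal (min 1 (r ^ 2)) ≠ 0 := by simp [hr.ne']
  calc ν {x | r < ‖x‖}
      ≤ ν {x | ENNReal.ofReal (min 1 (r ^ 2)) ≤ ENNReal.ofReal (min 1 (‖x‖ ^ 2))} :=
        measure_mono fun x hx =>
          ofReal_le_ofReal (min_le_min_left _ (pow_le_pow_left₀ hr.le (le_of_lt hx) 2))
    _ ≤ (∫⁻ x, ENNReal.ofReal (min 1 (‖x‖ ^ 2)) ∂ν) / ENNReal.ofReal (min 1 (r ^ 2)) :=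
        meas_ge_le_lintegral_div (by fun_prop) hε ofReal_ne_top
    _ < ⊤ := ENNReal.div_lt_top hν2.ne hε

lemma sigmaFinite_of_levy (hν0 : ν {0} = 0)
    (hν2 : ∫⁻ x, ENNReal.ofReal (min 1 (‖x‖ ^ 2)) ∂ν < ⊤) : SigmaFinite ν := by
  refine ⟨⟨⟨fun n => {x | 1 / (n + 1 : ℝ) < ‖x‖} ∪ {0}, fun _ => trivial, fun n => ?_, ?_⟩⟩⟩
  · refine (measure_union_le _ _).trans_lt ?_
    rw [hν0, add_zero]
    exact measure_lt_norm_lt_top hν2 (by positivity)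
  · refine eq_univ_of_forall fun x => mem_iUnion.2 ?_
    rcases eq_or_ne x 0 with rfl | hx
    · exact ⟨0, Or.inr rfl⟩
    · obtain ⟨n, hn⟩ := exists_nat_one_div_lt (norm_pos_iff.2 hx)
      exact ⟨n, Or.inl hn⟩

lemma setLIntegral_mul_norm_sq_lt_top (hν2 : ∫⁻ x, ENNReal.ofReal (min 1 (‖x‖ ^ 2)) ∂ν < ⊤)
    {c : ℝ} (hc : 0 ≤ c) {r : ℝ} (hr : r ≤ 1) :
    ∫⁻ x in {x | ‖x‖ ≤ r}, ENNReal.ofReal (c * ‖x‖ ^ 2) ∂ν < ⊤ := by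
  calc ∫⁻ x in {x | ‖x‖ ≤ r}, ENNReal.ofReal (c * ‖x‖ ^ 2) ∂ν
      ≤ ∫⁻ x, ENNReal.ofReal c * ENNReal.ofReal (min 1 (‖x‖ ^ 2)) ∂ν := by
        refine (setLIntegral_mono' (measurableSet_le (by fun_prop) (by fun_prop))
          fun x hx => ?_).trans (setLIntegral_le_lintegral _ _)
        rw [min_eq_right (pow_le_one₀ (norm_nonneg x) (le_trans hx hr)), ofReal_mul hc]
    _ = ENNReal.ofReal c * ∫⁻ x, ENNReal.ofReal (min 1 (‖x‖ ^ 2)) ∂ν :=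
        lintegral_const_mul' _ _ ofReal_ne_top
    _ < ⊤ := mul_lt_top ofReal_lt_top hν2

lemma setLIntegral_log_mul_norm_lt_top
    (hν2 : ∫⁻ x, ENNReal.ofReal (min 1 (‖x‖ ^ 2)) ∂ν < ⊤)
    (hνlog : ∫⁻ x in {x | 1 < ‖x‖}, ENNReal.ofReal (log ‖x‖) ∂ν < ⊤)
    {a r : ℝ} (ha : 0 < a) (hr : 0 < r) (b : ℝ) {c : ℝ} (hc : 0 ≤ c) :
    ∫⁻ x in {x | r < ‖x‖}, ENNReal.ofReal ((log (a * ‖x‖) + b) / c) ∂ν < ⊤ := by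
  have hlog : ∫⁻ x, ENNReal.ofReal (log ‖x‖) ∂ν < ⊤ := by
    rwa [← setLIntegral_eq_of_support_subset fun x hx =>
      (log_pos_iff (norm_nonneg x)).1 (ofReal_pos.1 (pos_iff_ne_zero.2 hx))]
  calc ∫⁻ x in {x | r < ‖x‖}, ENNReal.ofReal ((log (a * ‖x‖) + b) / c) ∂ν
      ≤ ∫⁻ x in {x | r < ‖x‖},
          ENNReal.ofReal ((log a + b) / c) + ENNReal.ofReal c⁻¹ * ENNReal.ofReal (log ‖x‖) ∂ν := by
        refine setLIntegral_mono (by fun_prop) fun x hx => ?_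
        rw [← ofReal_mul (inv_nonneg.2 hc), log_mul ha.ne' (hr.trans hx).ne']
        exact (ofReal_le_ofReal (le_of_eq (by ring))).trans ofReal_add_le
    _ ≤ ENNReal.ofReal ((log a + b) / c) * ν {x | r < ‖x‖} +
          ENNReal.ofReal c⁻¹ * ∫⁻ x, ENNReal.ofReal (log ‖x‖) ∂ν := by
        rw [lintegral_add_left measurable_const, setLIntegral_const,
          lintegral_const_mul' _ _ ofReal_ne_top]
        gcongr
        exact Measure.restrict_le_self
    _ < ⊤ := add_lt_top.2 ⟨mul_lt_top ofReal_lt_top (measure_lt_norm_lt_top hν2 hr),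
        mul_lt_top ofReal_lt_top hlog⟩

end LevyMeasure

theorem levy_measure_double_integral_bound {d : ℕ} (A : Matrix (Fin d) (Fin d) ℝ)
    (κ ρ : ℝ) (hκ : 1 ≤ κ) (hρ : 0 < ρ)
    (hbound : ∀ s : ℝ, 0 ≤ s →
      euclideanOpNorm (NormedSpace.exp (s • A)) ≤ κ * Real.exp (-ρ * s))
    (ν : Measure (EuclideanSpace ℝ (Fin d)))
    (hν0 : ν {0} = 0)
    (hν2 : ∫⁻ x, ENNReal.ofReal (min 1 (‖x‖ ^ 2)) ∂ν < ⊤)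
    (hνlog : ∫⁻ x in {x : EuclideanSpace ℝ (Fin d) | 1 < ‖x‖},
        ENNReal.ofReal (Real.log ‖x‖) ∂ν < ⊤) :
    (∫⁻ s in Set.Ioi (0 : ℝ), ∫⁻ x,
          ENNReal.ofReal
            (min 1 (‖Matrix.toEuclideanCLM (𝕜 := ℝ) (NormedSpace.exp (s • A)) x‖ ^ 2)) ∂ν) ≤
        (∫⁻ x in {x : EuclideanSpace ℝ (Fin d) | 1 / κ < ‖x‖},
            ENNReal.ofReal ((Real.log (κ * ‖x‖) + 1 / 2) / ρ) ∂ν) +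
          ∫⁻ x in {x : EuclideanSpace ℝ (Fin d) | ‖x‖ ≤ 1 / κ},
            ENNReal.ofReal (κ ^ 2 * ‖x‖ ^ 2 / (2 * ρ)) ∂ν ∧
      (∫⁻ x in {x : EuclideanSpace ℝ (Fin d) | 1 / κ < ‖x‖},
            ENNReal.ofReal ((Real.log (κ * ‖x‖) + 1 / 2) / ρ) ∂ν) +
          (∫⁻ x in {x : EuclideanSpace ℝ (Fin d) | ‖x‖ ≤ 1 / κ},
            ENNReal.ofReal (κ ^ 2 * ‖x‖ ^ 2 / (2 * ρ)) ∂ν) < ⊤ := by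
  have hκ0 : 0 < κ := one_pos.trans_le hκ
  have := sigmaFinite_of_levy hν0 hν2
  have hdecay : ∀ s, 0 ≤ s → ∀ x,
      ‖Matrix.toEuclideanCLM (𝕜 := ℝ) (NormedSpace.exp (s • A)) x‖ ≤ κ * ‖x‖ * exp (-ρ * s) :=
    fun s hs x => ((ContinuousLinearMap.le_opNorm _ x).trans
      (mul_le_mul_of_nonneg_right (hbound s hs) (norm_nonneg x))).trans_eq (by ring)
  have hS : MeasurableSet {x : EuclideanSpace ℝ (Fin d) | 1 / κ < ‖x‖} :=
    measurableSet_lt measurable_const measurable_norm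
  have hT : MeasurableSet {x : EuclideanSpace ℝ (Fin d) | ‖x‖ ≤ 1 / κ} :=
    measurableSet_le measurable_norm measurable_const
  have hlarge := setLIntegral_log_mul_norm_lt_top hν2 hνlog hκ0 (one_div_pos.2 hκ0) (1 / 2) hρ.le
  have hsmall : ∫⁻ x in {x : EuclideanSpace ℝ (Fin d) | ‖x‖ ≤ 1 / κ},
      ENNReal.ofReal (κ ^ 2 * ‖x‖ ^ 2 / (2 * ρ)) ∂ν < ⊤ := by
    simp_rw [← div_mul_eq_mul_div]
    exact setLIntegral_mul_norm_sq_lt_top hν2 (by positivity) ((div_le_one hκ0).2 hκ)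
  refine ⟨?_, add_lt_top.2 ⟨hlarge, hsmall⟩⟩
  calc _ ≤ ∫⁻ s in Ioi (0 : ℝ), ∫⁻ x, ENNReal.ofReal (min 1 ((κ * ‖x‖ * exp (-ρ * s)) ^ 2)) ∂ν :=
        setLIntegral_mono' measurableSet_Ioi fun s hs => lintegral_mono fun x =>
          ofReal_le_ofReal (min_le_min_left 1
            (pow_le_pow_left₀ (norm_nonneg _) (hdecay s (le_of_lt hs) x) 2))
    _ = ∫⁻ x, (∫⁻ s in Ioi (0 : ℝ), ENNReal.ofReal (min 1 ((κ * ‖x‖ * exp (-ρ * s)) ^ 2))) ∂ν :=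
        lintegral_lintegral_swap (by fun_prop)
    _ ≤ _ := (lintegral_mono (lintegral_Ioi_min_one_sq_mul_exp_le_indicator hκ0 hρ)).trans_eq (by
        rw [lintegral_add_left (Measurable.indicator (by fun_prop) hS), lintegral_indicator hS,
          lintegral_indicator hT])
end
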